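/- Every path p' in ℂQ' can be written as p' = q·ξ(p) for some path p ∈ ℂQ and some path q ∈ ℂQ' composed solely of isomorphism arrows and their inverses. In particular, if deg(p') ≡ 0 mod n (for the grading giving isomorphism arrows degree 1, their inverses degree −1, and all other arrows degree 0), then p' lies in the image of ξ. -/

import Mathlib

noncomputable section
open scoped Classical

structure Quiv : Type 1 where
  V : Type
  A : Type
  [finV : Fintype V]
  [finA : Fintype A]
  s : A → V
  t : A → V

attribute [instance] Quiv.finV Quiv.finA

namespace Quiv

variable (k : Type) [CommRing k] (Q : Quiv)

inductive PathRel : FreeAlgebra k (Q.V ⊕ Q.A) → FreeAlgebra k (Q.V ⊕ Q.A) → Prop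
  | vertex_mul (i j : Q.V) : PathRel
      (FreeAlgebra.ι k (Sum.inl i) * FreeAlgebra.ι k (Sum.inl j))
      (if i = j then FreeAlgebra.ι k (Sum.inl i) else 0)
  | vertex_sum : PathRel (∑ i : Q.V, FreeAlgebra.ι k (Sum.inl i)) 1
  | target_mul (a : Q.A) : PathRel
      (FreeAlgebra.ι k (Sum.inl (Q.t a)) * FreeAlgebra.ι k (Sum.inr a))
      (FreeAlgebra.ι k (Sum.inr a))
  | source_mul (a : Q.A) : PathRel
      (FreeAlgebra.ι k (Sum.inr a) * FreeAlgebra.ι k (Sum.inl (Q.s a)))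
      (FreeAlgebra.ι k (Sum.inr a))

def PathAlg : Type := RingQuot (PathRel k Q)

instance : Ring (PathAlg k Q) := inferInstanceAs (Ring (RingQuot _))
instance : Algebra k (PathAlg k Q) := inferInstanceAs (Algebra k (RingQuot _))

def vtx (i : Q.V) : PathAlg k Q :=
  RingQuot.mkAlgHom k (PathRel k Q) (FreeAlgebra.ι k (Sum.inl i))

def arr (a : Q.A) : PathAlg k Q :=
  RingQuot.mkAlgHom k (PathRel k Q) (FreeAlgebra.ι k (Sum.inr a))

def pathOf (l : List Q.A) : PathAlg k Q := (l.map (arr k Q)).prod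

def Composable (l : List Q.A) : Prop := List.Chain' (fun a b => Q.s a = Q.t b) l

def IsCycle (l : List Q.A) : Prop :=
  l ≠ [] ∧ List.Chain' (fun a b => Q.s a = Q.t b) (l ++ l.take 1)

def IsPathFrom (l : List Q.A) (i j : Q.V) : Prop :=
  Composable Q l ∧ (l = [] → i = j) ∧
    (∀ h : l ≠ [], Q.t (l.head h) = j) ∧ (∀ h : l ≠ [], Q.s (l.getLast h) = i)

def cycDeriv (l : List Q.A) (a : Q.A) : PathAlg k Q :=
  ∑ i ∈ Finset.range l.length,
    if (l.rotate i).head? = some a then pathOf k Q (l.rotate i).tail else 0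

abbrev Potential := List (k × List Q.A)

def Potential.deriv (W : Potential k Q) (a : Q.A) : PathAlg k Q :=
  (W.map fun p => p.1 • cycDeriv k Q p.2 a).sum

def Potential.elem (W : Potential k Q) : PathAlg k Q :=
  (W.map fun p => p.1 • pathOf k Q p.2).sum

inductive JacRel (W : Potential k Q) : PathAlg k Q → PathAlg k Q → Prop
  | deriv (a : Q.A) : JacRel W (Potential.deriv k Q W a) 0

def Jac (W : Potential k Q) : Type := RingQuot (JacRel k Q W)

instance (W : Potential k Q) : Ring (Jac k Q W) := inferInstanceAs (Ring (RingQuot _))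
instance (W : Potential k Q) : Algebra k (Jac k Q W) := inferInstanceAs (Algebra k (RingQuot _))

def jacMk (W : Potential k Q) : PathAlg k Q →ₐ[k] Jac k Q W :=
  RingQuot.mkAlgHom k (JacRel k Q W)

def Potential.memIdeal (W : Potential k Q) (x : PathAlg k Q) : Prop :=
  jacMk k Q W x = 0

def loc (S : Set Q.A) : Quiv where
  V := Q.V
  A := Q.A ⊕ ↥S
  s := Sum.elim Q.s fun a => Q.t a.1
  t := Sum.elim Q.t fun a => Q.s a.1

inductive LocRel (S : Set Q.A) : PathAlg k (Q.loc S) → PathAlg k (Q.loc S) → Prop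
  | inv_mul (a : ↥S) : LocRel S
      (arr k (Q.loc S) (Sum.inr a) * arr k (Q.loc S) (Sum.inl a.1))
      (vtx k (Q.loc S) (Q.s a.1))
  | mul_inv (a : ↥S) : LocRel S
      (arr k (Q.loc S) (Sum.inl a.1) * arr k (Q.loc S) (Sum.inr a))
      (vtx k (Q.loc S) (Q.t a.1))

def LocAlg (S : Set Q.A) : Type := RingQuot (LocRel k Q S)

instance (S : Set Q.A) : Ring (LocAlg k Q S) := inferInstanceAs (Ring (RingQuot _))
instance (S : Set Q.A) : Algebra k (LocAlg k Q S) := inferInstanceAs (Algebra k (RingQuot _))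

def locMk (S : Set Q.A) : PathAlg k (Q.loc S) →ₐ[k] LocAlg k Q S :=
  RingQuot.mkAlgHom k (LocRel k Q S)

def locVtx (S : Set Q.A) (i : Q.V) : LocAlg k Q S := locMk k Q S (vtx k (Q.loc S) i)

def locArr (S : Set Q.A) (x : (Q.loc S).A) : LocAlg k Q S := locMk k Q S (arr k (Q.loc S) x)

def locProd (S : Set Q.A) (l : List (Q.loc S).A) : LocAlg k Q S :=
  locMk k Q S (pathOf k (Q.loc S) l)

inductive JacLRel (S : Set Q.A) (W : Potential k (Q.loc S)) :
    LocAlg k Q S → LocAlg k Q S → Prop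
  | deriv (x : (Q.loc S).A) : JacLRel S W (locMk k Q S (Potential.deriv k (Q.loc S) W x)) 0

def JacL (S : Set Q.A) (W : Potential k (Q.loc S)) : Type := RingQuot (JacLRel k Q S W)

instance (S : Set Q.A) (W : Potential k (Q.loc S)) : Ring (JacL k Q S W) :=
  inferInstanceAs (Ring (RingQuot _))
instance (S : Set Q.A) (W : Potential k (Q.loc S)) : Algebra k (JacL k Q S W) :=
  inferInstanceAs (Algebra k (RingQuot _))

def jacLMk (S : Set Q.A) (W : Potential k (Q.loc S)) : LocAlg k Q S →ₐ[k] JacL k Q S W :=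
  RingQuot.mkAlgHom k (JacLRel k Q S W)

def memIdealL (S : Set Q.A) (W : Potential k (Q.loc S)) (x : LocAlg k Q S) : Prop :=
  jacLMk k Q S W x = 0

def locWeight (S : Set Q.A) (w : Q.A → ℤ) : (Q.loc S).A → ℤ :=
  Sum.elim w fun a => - w a.1

def degPart (S : Set Q.A) (w : Q.A → ℤ) (d : ℤ) : Submodule k (LocAlg k Q S) :=
  Submodule.span k {x | (d = 0 ∧ ∃ i : Q.V, x = locVtx k Q S i) ∨
    ∃ l : List (Q.loc S).A, (l.map (locWeight Q S w)).sum = d ∧ x = locProd k Q S l}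

structure Tiling where
  TV : Type
  [finTV : Fintype TV]
  isWhite : TV → Bool
  whiteOf : Q.A → TV
  blackOf : Q.A → TV
  whiteOf_white : ∀ a, isWhite (whiteOf a) = true
  blackOf_black : ∀ a, isWhite (blackOf a) = false
  cyc : TV → List Q.A
  cyc_isCycle : ∀ v, IsCycle Q (cyc v)
  cyc_nodup : ∀ v, (cyc v).Nodup
  mem_cyc : ∀ v a, a ∈ cyc v ↔ whiteOf a = v ∨ blackOf a = v

attribute [instance] Tiling.finTV

def Tiling.potential (T : Tiling Q) : Potential k Q :=
  (Finset.univ (α := T.TV)).toList.map fun v =>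
    ((if T.isWhite v then (1 : k) else -1), T.cyc v)

structure Aut where
  onV : Q.V ≃ Q.V
  onA : Q.A ≃ Q.A
  s_comm : ∀ a, Q.s (onA a) = onV (Q.s a)
  t_comm : ∀ a, Q.t (onA a) = onV (Q.t a)

structure TAut (T : Tiling Q) extends Aut Q where
  onTV : T.TV ≃ T.TV
  white_comm : ∀ v, T.isWhite (onTV v) = T.isWhite v
  whiteOf_comm : ∀ a, T.whiteOf (onA a) = onTV (T.whiteOf a)
  blackOf_comm : ∀ a, T.blackOf (onA a) = onTV (T.blackOf a)
  cyc_comm : ∀ v, ∃ m, T.cyc (onTV v) = ((T.cyc v).map onA).rotate m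

def Aut.OrderDvd (g : Aut Q) (n : ℕ) : Prop :=
  (∀ i, (⇑g.onV)^[n] i = i) ∧ (∀ a, (⇑g.onA)^[n] a = a)

def Aut.FreeVertexOrbits (g : Aut Q) (n : ℕ) : Prop :=
  ∀ i : Q.V, ∀ m, 0 < m → m < n → (⇑g.onV)^[m] i ≠ i

structure OrbitChoice (g : Aut Q) where
  genArrow : Q.A → Q.A
  genArrow_orbit : ∀ a, ∃ m, (⇑g.onA)^[m] (genArrow a) = a
  genArrow_comm : ∀ a, genArrow (g.onA a) = genArrow a
  genArrow_idem : ∀ a, genArrow (genArrow a) = genArrow a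
  repV : Q.V → Q.V
  repV_orbit : ∀ i, ∃ m, (⇑g.onV)^[m] (repV i) = i
  repV_comm : ∀ i, repV (g.onV i) = repV i
  repV_idem : ∀ i, repV (repV i) = repV i

def sharp (g : Aut Q) (n : ℕ) (C : OrbitChoice Q g) : Quiv where
  V := Q.V
  A := {a : Q.A // C.genArrow a = a} ⊕ ({i : Q.V // C.repV i = i} × Fin (n - 1))
  s := Sum.elim (fun a => Q.s a.1) fun p => (⇑g.onV)^[p.2.1] p.1.1
  t := Sum.elim (fun a => Q.t a.1) fun p => (⇑g.onV)^[p.2.1 + 1] p.1.1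

def isoSet (g : Aut Q) (n : ℕ) (C : OrbitChoice Q g) : Set (sharp Q g n C).A :=
  Set.range Sum.inr

variable (g : Aut Q) (n : ℕ) (C : OrbitChoice Q g)

/-- An isomorphism arrow, viewed as an arrow of the localised quiver. -/
def isoArrLoc (y : {i : Q.V // C.repV i = i} × Fin (n - 1)) :
    ((sharp Q g n C).loc (isoSet Q g n C)).A :=
  Sum.inl (Sum.inr y)

/-- The inverse of an isomorphism arrow, viewed as an arrow of the localised
quiver. -/
def isoInvLoc (y : {i : Q.V // C.repV i = i} × Fin (n - 1)) :
    ((sharp Q g n C).loc (isoSet Q g n C)).A :=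
  Sum.inr ⟨Sum.inr y, ⟨y, rfl⟩⟩

/-- The chosen generating arrow of the orbit of `a`, viewed as an arrow of the
localised quiver. -/
def genLoc (a : Q.A) : ((sharp Q g n C).loc (isoSet Q g n C)).A :=
  Sum.inl (Sum.inl ⟨C.genArrow a, C.genArrow_idem a⟩)

/-- `l` consists solely of isomorphism arrows and their inverses. -/
def IsIsoList (l : List ((sharp Q g n C).loc (isoSet Q g n C)).A) : Prop :=
  ∀ x ∈ l, (∃ y, x = isoArrLoc Q g n C y) ∨ (∃ y, x = isoInvLoc Q g n C y)

/-- A choice, for every arrow `a` of `Q`, of the connecting paths `p_a` (from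
`t(a_j)` to `t(a)`) and `q_a` (from `s(a)` to `s(a_j)`) composed solely of
isomorphism arrows and their inverses, where `a_j` is the chosen generating
arrow of the orbit of `a`. -/
structure ConnData where
  P : Q.A → List ((sharp Q g n C).loc (isoSet Q g n C)).A
  Qc : Q.A → List ((sharp Q g n C).loc (isoSet Q g n C)).A
  isoP : ∀ a, IsIsoList Q g n C (P a)
  isoQc : ∀ a, IsIsoList Q g n C (Qc a)
  endP : ∀ a, IsPathFrom ((sharp Q g n C).loc (isoSet Q g n C)) (P a)
      (Q.t (C.genArrow a)) (Q.t a)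
  endQc : ∀ a, IsPathFrom ((sharp Q g n C).loc (isoSet Q g n C)) (Qc a)
      (Q.s a) (Q.s (C.genArrow a))

/-- The image of an arrow `a` of `Q` under `ξ`, as a list of arrows of the
localised quiver: `p_a ⧺ [a_j] ⧺ q_a`. -/
def xiArrList (cd : ConnData Q g n C) (a : Q.A) :
    List ((sharp Q g n C).loc (isoSet Q g n C)).A :=
  cd.P a ++ [genLoc Q g n C a] ++ cd.Qc a

/-- The image of a path of `Q` under `ξ`, as a list of arrows of the localised
quiver. -/
def xiList (cd : ConnData Q g n C) (l : List Q.A) :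
    List ((sharp Q g n C).loc (isoSet Q g n C)).A :=
  l.flatMap (xiArrList Q g n C cd)

/-- The specification of the algebra homomorphism
`ξ : kQ → kQ'`: it sends constant paths to constant paths, and the arrow `a`
to `p_a a_j q_a`. -/
def XiSpec (cd : ConnData Q g n C)
    (ξ : PathAlg k Q →ₐ[k] LocAlg k (sharp Q g n C) (isoSet Q g n C)) : Prop :=
  (∀ i : Q.V, ξ (vtx k Q i) = locVtx k (sharp Q g n C) (isoSet Q g n C) i) ∧
  ∀ a : Q.A, ξ (arr k Q a) =
    locProd k (sharp Q g n C) (isoSet Q g n C) (xiArrList Q g n C cd a)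

/-- The potential `W' = ξ(W)` on the localised quiver induced by the potential
of a brane tiling. -/
def inducedPotential (T : Tiling Q) (cd : ConnData Q g n C) :
    Potential k ((sharp Q g n C).loc (isoSet Q g n C)) :=
  (Finset.univ (α := T.TV)).toList.map fun v =>
    ((if T.isWhite v then (1 : k) else -1), xiList Q g n C cd (T.cyc v))

/-- The degree of arrows of `Q^#`: isomorphism arrows have degree `1`, the
generating arrows degree `0` (their formal inverses then get degree `-1`). -/
def sharpWeight : (sharp Q g n C).A → ℤ := Sum.elim (fun _ => 0) fun _ => 1

/-- The rotation of a cycle `l` placing the arrow `a` at the end. -/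
def rotTo (l : List Q.A) (a : Q.A) : List Q.A := l.rotate (l.idxOf a + 1)

end Quiv

/-!
Write every vertex as `v = g^(h v) (ρ v)`, with `ρ v` the chosen representative of its orbit and
height `h v < n`; the height is unique because vertex orbits are free. A path `r` of isomorphism
arrows and their inverses from `u` to `v` then satisfies `r e_u = lift v * drop u`, where `lift v`
climbs from `ρ v` to `v` along isomorphism arrows and `drop u` is the inverse climb. So such a
path only depends on its endpoints, and its degree is `h v - h u`.

Read a path `p'` of `Q'` from its source, keeping `p' e_u = q ξ(e_w p e_u)` with `q` an
isomorphism path. An isomorphism arrow is absorbed into `q`. A generating arrow `a_j` is replaced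
by `ξ(a) = p_a a_j q_a`, for the arrow `a` of its orbit that starts at `w`: `q_a` has the same
endpoints as `q`, and `p_a` is cancelled by its reverse. The degree of `p'` stays congruent to
that of `q` modulo `n`, so when `n ∣ deg p'` the path `q` joins two vertices of the same orbit
and height; it is a loop and acts as `e_w`.
-/

namespace Quiv

section Paths

variable {Q : Quiv} {l : List Q.A} {u v : Q.V}

lemma isPathFrom_nil_iff : IsPathFrom Q [] u v ↔ u = v :=
  ⟨fun h => h.2.1 rfl, fun h => ⟨List.isChain_nil, fun _ => h, fun h' => absurd rfl h',
    fun h' => absurd rfl h'⟩⟩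

set_option linter.deprecated false in
lemma isPathFrom_cons_iff {x : Q.A} :
    IsPathFrom Q (x :: l) u v ↔ Q.t x = v ∧ IsPathFrom Q l u (Q.s x) := by
  cases l with
  | nil => simp [IsPathFrom, Composable, List.Chain', eq_comm]
  | cons y l =>
    simp only [IsPathFrom, Composable, List.Chain', List.isChain_cons_cons, reduceCtorEq,
      List.head_cons, List.getLast_cons_cons, false_implies, true_and, ne_eq, not_false_eq_true,
      forall_const, forall_true_left]
    constructor
    · rintro ⟨⟨hxy, hc⟩, hx, hu⟩
      exact ⟨hx, hc, hxy.symm, hu⟩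
    · rintro ⟨hx, hc, hxy, hu⟩
      exact ⟨⟨hxy.symm, hc⟩, hx, hu⟩

lemma isPathFrom_of_composable (h : Composable Q l) (hne : l ≠ []) :
    IsPathFrom Q l (Q.s (l.getLast hne)) (Q.t (l.head hne)) :=
  ⟨h, fun h' => absurd h' hne, fun _ => rfl, fun _ => rfl⟩

lemma IsPathFrom.append {l' : List Q.A} {w : Q.V} (h : IsPathFrom Q l w v)
    (h' : IsPathFrom Q l' u w) : IsPathFrom Q (l ++ l') u v := by
  induction l generalizing v with
  | nil => rwa [← isPathFrom_nil_iff.1 h]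
  | cons x l ih =>
    rw [List.cons_append, isPathFrom_cons_iff] at *
    exact ⟨h.1, ih h.2⟩

lemma IsPathFrom.reverse_map (h : IsPathFrom Q l u v) (f : Q.A → Q.A)
    (hs : ∀ x ∈ l, Q.s (f x) = Q.t x) (ht : ∀ x ∈ l, Q.t (f x) = Q.s x) :
    IsPathFrom Q (l.map f).reverse v u := by
  induction l generalizing v with
  | nil => exact isPathFrom_nil_iff.2 (isPathFrom_nil_iff.1 h).symm
  | cons x l ih =>
    rw [isPathFrom_cons_iff] at h
    rw [List.map_cons, List.reverse_cons]
    refine (ih h.2 (fun y hy => hs y (.tail _ hy)) fun y hy => ht y (.tail _ hy)).append ?_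
    rw [isPathFrom_cons_iff, isPathFrom_nil_iff, ht x (.head _), hs x (.head _)]
    exact ⟨rfl, h.1.symm⟩

lemma IsPathFrom.eq_of_forall {α : Type*} (h : IsPathFrom Q l u v) (φ : Q.V → α)
    (hφ : ∀ x ∈ l, φ (Q.s x) = φ (Q.t x)) : φ u = φ v := by
  induction l generalizing v with
  | nil => rw [isPathFrom_nil_iff.1 h]
  | cons x l ih =>
    rw [isPathFrom_cons_iff] at h
    rw [← h.1, ← hφ x (.head _)]
    exact ih h.2 fun y hy => hφ y (.tail _ hy)

lemma IsPathFrom.sum_map_eq_sub {G : Type*} [AddCommGroup G] (h : IsPathFrom Q l u v)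
    (w : Q.A → G) (f : Q.V → G) (hw : ∀ x ∈ l, w x = f (Q.t x) - f (Q.s x)) :
    (l.map w).sum = f v - f u := by
  induction l generalizing v with
  | nil => simp [isPathFrom_nil_iff.1 h]
  | cons x l ih =>
    rw [isPathFrom_cons_iff] at h
    rw [List.map_cons, List.sum_cons, ih h.2 fun y hy => hw y (.tail _ hy), hw x (.head _), ← h.1]
    abel

lemma IsPathFrom.prod_map_mul_eq {M : Type*} [Monoid M] (h : IsPathFrom Q l u v)
    (m : Q.A → M) (F : Q.V → M) (hm : ∀ x ∈ l, m x * F (Q.s x) = F (Q.t x)) :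
    (l.map m).prod * F u = F v := by
  induction l generalizing v with
  | nil => simp [isPathFrom_nil_iff.1 h]
  | cons x l ih =>
    rw [isPathFrom_cons_iff] at h
    rw [List.map_cons, List.prod_cons, mul_assoc, ih h.2 fun y hy => hm y (.tail _ hy),
      hm x (.head _), h.1]

end Paths

section PathAlgebra

variable {k : Type} [CommRing k] {Q : Quiv}

@[simp] lemma pathOf_nil : pathOf k Q [] = 1 := rfl

@[simp] lemma pathOf_cons (a : Q.A) (l : List Q.A) :
    pathOf k Q (a :: l) = arr k Q a * pathOf k Q l := by
  simp [pathOf]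

lemma vtx_mul_self (i : Q.V) : vtx k Q i * vtx k Q i = vtx k Q i := by
  have h := RingQuot.mkAlgHom_rel k (PathRel.vertex_mul (k := k) (Q := Q) i i)
  rw [map_mul, if_pos rfl] at h
  exact h

lemma vtx_mul_arr (a : Q.A) : vtx k Q (Q.t a) * arr k Q a = arr k Q a := by
  have h := RingQuot.mkAlgHom_rel k (PathRel.target_mul (k := k) (Q := Q) a)
  rw [map_mul] at h
  exact h

lemma arr_mul_vtx (a : Q.A) : arr k Q a * vtx k Q (Q.s a) = arr k Q a := by
  have h := RingQuot.mkAlgHom_rel k (PathRel.source_mul (k := k) (Q := Q) a)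
  rw [map_mul] at h
  exact h

lemma IsPathFrom.pathOf_mul_vtx {l : List Q.A} {u v : Q.V} (h : IsPathFrom Q l u v)
    (hne : l ≠ []) : pathOf k Q l * vtx k Q u = pathOf k Q l := by
  induction l generalizing v with
  | nil => exact absurd rfl hne
  | cons x l ih =>
    rw [isPathFrom_cons_iff] at h
    rw [pathOf_cons, mul_assoc]
    rcases eq_or_ne l [] with rfl | hl
    · rw [pathOf_nil, one_mul, isPathFrom_nil_iff.1 h.2, arr_mul_vtx, mul_one]
    · rw [ih h.2 hl]

lemma IsPathFrom.vtx_mul_pathOf_mul_vtx {l : List Q.A} {u v : Q.V} (h : IsPathFrom Q l u v)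
    (hne : l ≠ []) : vtx k Q v * pathOf k Q l * vtx k Q u = pathOf k Q l := by
  obtain ⟨x, l, rfl⟩ := List.exists_cons_of_ne_nil hne
  rw [mul_assoc, h.pathOf_mul_vtx hne, pathOf_cons, ← mul_assoc, ← (isPathFrom_cons_iff.1 h).1,
    vtx_mul_arr]

end PathAlgebra

section Localisation

variable {k : Type} [CommRing k] {Q : Quiv} {S : Set Q.A}

@[simp] lemma locProd_nil : locProd k Q S [] = 1 := by
  simp [locProd]

@[simp] lemma locProd_cons (x : (Q.loc S).A) (l : List (Q.loc S).A) :
    locProd k Q S (x :: l) = locArr k Q S x * locProd k Q S l := by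
  simp [locProd, locArr]

@[simp] lemma locProd_append (l l' : List (Q.loc S).A) :
    locProd k Q S (l ++ l') = locProd k Q S l * locProd k Q S l' := by
  simp [locProd, pathOf]

lemma locProd_eq_prod (l : List (Q.loc S).A) :
    locProd k Q S l = (l.map (locArr k Q S)).prod := by
  induction l with
  | nil => simp
  | cons x l ih => rw [locProd_cons, ih, List.map_cons, List.prod_cons]

lemma locVtx_mul_self (i : Q.V) : locVtx k Q S i * locVtx k Q S i = locVtx k Q S i := by
  have h := congrArg (locMk k Q S) (vtx_mul_self (k := k) (Q := Q.loc S) i)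
  rw [map_mul] at h
  exact h

lemma locVtx_mul_locArr (x : (Q.loc S).A) :
    locVtx k Q S ((Q.loc S).t x) * locArr k Q S x = locArr k Q S x := by
  have h := congrArg (locMk k Q S) (vtx_mul_arr (k := k) x)
  rw [map_mul] at h
  exact h

lemma locArr_mul_locVtx (x : (Q.loc S).A) :
    locArr k Q S x * locVtx k Q S ((Q.loc S).s x) = locArr k Q S x := by
  have h := congrArg (locMk k Q S) (arr_mul_vtx (k := k) x)
  rw [map_mul] at h
  exact h

lemma locArr_inv_mul_locArr (a : S) :
    locArr k Q S (Sum.inr a) * locArr k Q S (Sum.inl a.1) = locVtx k Q S (Q.s a.1) := by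
  have h := RingQuot.mkAlgHom_rel k (LocRel.inv_mul (k := k) a)
  rw [map_mul] at h
  exact h

lemma locArr_mul_locArr_inv (a : S) :
    locArr k Q S (Sum.inl a.1) * locArr k Q S (Sum.inr a) = locVtx k Q S (Q.t a.1) := by
  have h := RingQuot.mkAlgHom_rel k (LocRel.mul_inv (k := k) a)
  rw [map_mul] at h
  exact h

lemma IsPathFrom.locProd_mul_locVtx {l : List (Q.loc S).A} {u v : Q.V}
    (h : IsPathFrom (Q.loc S) l u v) (hne : l ≠ []) :
    locProd k Q S l * locVtx k Q S u = locProd k Q S l := by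
  have h' := congrArg (locMk k Q S) (h.pathOf_mul_vtx (k := k) hne)
  rw [map_mul] at h'
  exact h'

end Localisation

section Height

variable {Q : Quiv} (g : Aut Q) (C : OrbitChoice Q g) {n : ℕ}

def height (v : Q.V) : ℕ := Nat.find (C.repV_orbit v)

lemma iterate_height (v : Q.V) : (⇑g.onV)^[height g C v] (C.repV v) = v :=
  Nat.find_spec (C.repV_orbit v)

variable {g C}

lemma repV_iterate (m : ℕ) (v : Q.V) : C.repV ((⇑g.onV)^[m] v) = C.repV v := by
  induction m with
  | zero => rfl
  | succ m ih => rw [Function.iterate_succ_apply', C.repV_comm, ih]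

lemma s_iterate (m : ℕ) (a : Q.A) : Q.s ((⇑g.onA)^[m] a) = (⇑g.onV)^[m] (Q.s a) := by
  induction m with
  | zero => rfl
  | succ m ih => rw [Function.iterate_succ_apply', Function.iterate_succ_apply', g.s_comm, ih]

lemma t_iterate (m : ℕ) (a : Q.A) : Q.t ((⇑g.onA)^[m] a) = (⇑g.onV)^[m] (Q.t a) := by
  induction m with
  | zero => rfl
  | succ m ih => rw [Function.iterate_succ_apply', Function.iterate_succ_apply', g.t_comm, ih]

lemma genArrow_iterate (m : ℕ) (a : Q.A) : C.genArrow ((⇑g.onA)^[m] a) = C.genArrow a := by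
  induction m with
  | zero => rfl
  | succ m ih => rw [Function.iterate_succ_apply', C.genArrow_comm, ih]

lemma height_lt (hn : 0 < n) (ho : ∀ i, (⇑g.onV)^[n] i = i) (v : Q.V) :
    height g C v < n := by
  refine lt_of_le_of_lt (Nat.find_min' _ ?_) (Nat.mod_lt (height g C v) hn)
  rw [Function.IsPeriodicPt.iterate_mod_apply (ho _), iterate_height]

lemma exists_iterate_eq_of_repV_eq (hn : 0 < n) (ho : ∀ i, (⇑g.onV)^[n] i = i) {u v : Q.V}
    (h : C.repV u = C.repV v) : ∃ m, (⇑g.onV)^[m] u = v := by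
  have hu := height_lt (C := C) hn ho u
  refine ⟨height g C v + (n - height g C u), ?_⟩
  calc (⇑g.onV)^[height g C v + (n - height g C u)] u
      = (⇑g.onV)^[height g C v + (n - height g C u)]
          ((⇑g.onV)^[height g C u] (C.repV v)) := by rw [← h, iterate_height]
    _ = (⇑g.onV)^[height g C v] ((⇑g.onV)^[n] (C.repV v)) := by
      rw [← Function.iterate_add_apply, ← Function.iterate_add_apply]
      congr 1
      omega
    _ = v := by rw [ho, iterate_height]

lemma height_eq (hfree : Aut.FreeVertexOrbits Q g n) {v : Q.V} {m : ℕ} (hm : m < n)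
    (h : (⇑g.onV)^[m] (C.repV v) = v) : height g C v = m := by
  have hle : height g C v ≤ m := Nat.find_min' _ h
  by_contra hne
  refine hfree v (m - height g C v) (by omega) (by omega) ?_
  calc (⇑g.onV)^[m - height g C v] v
      = (⇑g.onV)^[m - height g C v] ((⇑g.onV)^[height g C v] (C.repV v)) := by
        rw [iterate_height]
    _ = v := by rw [← Function.iterate_add_apply, Nat.sub_add_cancel hle, h]

lemma height_iterate_of_repV (hfree : Aut.FreeVertexOrbits Q g n) {j : Q.V} (hj : C.repV j = j)
    {m : ℕ} (hm : m < n) : height g C ((⇑g.onV)^[m] j) = m :=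
  height_eq hfree hm (by rw [repV_iterate, hj])

lemma height_iterate (hn : 0 < n) (ho : ∀ i, (⇑g.onV)^[n] i = i)
    (hfree : Aut.FreeVertexOrbits Q g n) (m : ℕ) (v : Q.V) :
    (height g C ((⇑g.onV)^[m] v) : ZMod n) = height g C v + m := by
  rw [height_eq hfree (Nat.mod_lt _ hn), ZMod.natCast_mod, Nat.cast_add]
  rw [repV_iterate, Function.IsPeriodicPt.iterate_mod_apply (ho _), add_comm,
    Function.iterate_add_apply, iterate_height]

lemma eq_of_height_eq (hn : 0 < n) (ho : ∀ i, (⇑g.onV)^[n] i = i) {u v : Q.V}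
    (hrep : C.repV u = C.repV v) (h : (height g C u : ZMod n) = height g C v) : u = v := by
  rw [ZMod.natCast_eq_natCast_iff', Nat.mod_eq_of_lt (height_lt hn ho u),
    Nat.mod_eq_of_lt (height_lt hn ho v)] at h
  rw [← iterate_height g C u, ← iterate_height g C v, hrep, h]

end Height

section IsoPaths

variable {k : Type} [CommRing k] {Q : Quiv} {g : Aut Q} {n : ℕ} {C : OrbitChoice Q g}

local notation "𝒬" => Quiv.loc (sharp Q g n C) (isoSet Q g n C)
local notation "𝐩" => locProd k (sharp Q g n C) (isoSet Q g n C)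
local notation "𝐞" => locVtx k (sharp Q g n C) (isoSet Q g n C)
local notation "𝐱" => locArr k (sharp Q g n C) (isoSet Q g n C)

variable (Q g n C) in
def IsIsoArr (x : (𝒬).A) : Prop :=
  (∃ y, x = isoArrLoc Q g n C y) ∨ (∃ y, x = isoInvLoc Q g n C y)

lemma isIsoArr_or_eq_genLoc (x : (𝒬).A) :
    IsIsoArr Q g n C x ∨ ∃ a, x = genLoc Q g n C a := by
  rcases x with (⟨a, ha⟩ | y) | ⟨_, y, rfl⟩
  · exact Or.inr ⟨a, by simp only [genLoc, ha]; rfl⟩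
  · exact Or.inl (Or.inl ⟨y, rfl⟩)
  · exact Or.inl (Or.inr ⟨y, rfl⟩)

variable (Q g n C) in
def isoFlip : (𝒬).A → (𝒬).A
  | Sum.inl (Sum.inl b) => Sum.inl (Sum.inl b)
  | Sum.inl (Sum.inr y) => isoInvLoc Q g n C y
  | Sum.inr z => Sum.inl z.1

variable (Q g n C) in
def isoRev (l : List (𝒬).A) : List (𝒬).A := (l.map (isoFlip Q g n C)).reverse

lemma IsIsoList.isIsoArr {l : List (𝒬).A} (hl : IsIsoList Q g n C l) {x : (𝒬).A}
    (hx : x ∈ l) : IsIsoArr Q g n C x :=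
  hl x hx

lemma IsIsoArr.isoFlip {x : (𝒬).A} (hx : IsIsoArr Q g n C x) :
    IsIsoArr Q g n C (isoFlip Q g n C x) ∧ (𝒬).s (isoFlip Q g n C x) = (𝒬).t x ∧
      (𝒬).t (isoFlip Q g n C x) = (𝒬).s x := by
  rcases hx with ⟨y, rfl⟩ | ⟨y, rfl⟩
  exacts [⟨Or.inr ⟨y, rfl⟩, rfl, rfl⟩, ⟨Or.inl ⟨y, rfl⟩, rfl, rfl⟩]

lemma IsIsoList.isoRev {l : List (𝒬).A} (hl : IsIsoList Q g n C l) :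
    IsIsoList Q g n C (isoRev Q g n C l) := by
  simp only [Quiv.isoRev, IsIsoList, List.mem_reverse, List.mem_map]
  rintro _ ⟨x, hx, rfl⟩
  exact (hl.isIsoArr hx).isoFlip.1

lemma IsPathFrom.isoRev {l : List (𝒬).A} {u v : Q.V} (hl : IsIsoList Q g n C l)
    (h : IsPathFrom 𝒬 l u v) : IsPathFrom 𝒬 (isoRev Q g n C l) v u :=
  h.reverse_map _ (fun _ hx => (hl.isIsoArr hx).isoFlip.2.1)
    fun _ hx => (hl.isIsoArr hx).isoFlip.2.2

lemma IsIsoArr.repV_eq {x : (𝒬).A} (hx : IsIsoArr Q g n C x) :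
    C.repV ((𝒬).s x) = C.repV ((𝒬).t x) := by
  rcases hx with ⟨⟨j, t⟩, rfl⟩ | ⟨⟨j, t⟩, rfl⟩ <;>
    exact (repV_iterate _ j.1).trans (repV_iterate _ j.1).symm

lemma IsIsoArr.weight_eq (hfree : Aut.FreeVertexOrbits Q g n) {x : (𝒬).A}
    (hx : IsIsoArr Q g n C x) :
    locWeight (sharp Q g n C) (isoSet Q g n C) (sharpWeight Q g n C) x =
      (height g C ((𝒬).t x) : ℤ) - height g C ((𝒬).s x) := by
  rcases hx with ⟨⟨j, t, ht⟩, rfl⟩ | ⟨⟨j, t, ht⟩, rfl⟩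
  · change (1 : ℤ) = (height g C ((⇑g.onV)^[t + 1] j) : ℤ) - height g C ((⇑g.onV)^[t] j)
    rw [height_iterate_of_repV hfree j.2 (by omega), height_iterate_of_repV hfree j.2 (by omega)]
    push_cast
    ring
  · change (-1 : ℤ) = (height g C ((⇑g.onV)^[t] j) : ℤ) - height g C ((⇑g.onV)^[t + 1] j)
    rw [height_iterate_of_repV hfree j.2 (by omega), height_iterate_of_repV hfree j.2 (by omega)]
    push_cast
    ring

lemma locVtx_mul_isoArr (y : {i : Q.V // C.repV i = i} × Fin (n - 1)) :
    𝐞 ((⇑g.onV)^[y.2 + 1] y.1) * 𝐱 (isoArrLoc Q g n C y) = 𝐱 (isoArrLoc Q g n C y) :=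
  locVtx_mul_locArr (isoArrLoc Q g n C y)

lemma isoArr_mul_locVtx (y : {i : Q.V // C.repV i = i} × Fin (n - 1)) :
    𝐱 (isoArrLoc Q g n C y) * 𝐞 ((⇑g.onV)^[y.2] y.1) = 𝐱 (isoArrLoc Q g n C y) :=
  locArr_mul_locVtx (isoArrLoc Q g n C y)

lemma isoArr_mul_isoInv (y : {i : Q.V // C.repV i = i} × Fin (n - 1)) :
    𝐱 (isoArrLoc Q g n C y) * 𝐱 (isoInvLoc Q g n C y) = 𝐞 ((⇑g.onV)^[y.2 + 1] y.1) :=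
  locArr_mul_locArr_inv (⟨Sum.inr y, y, rfl⟩ : isoSet Q g n C)

lemma isoInv_mul_isoArr (y : {i : Q.V // C.repV i = i} × Fin (n - 1)) :
    𝐱 (isoInvLoc Q g n C y) * 𝐱 (isoArrLoc Q g n C y) = 𝐞 ((⇑g.onV)^[y.2] y.1) :=
  locArr_inv_mul_locArr (⟨Sum.inr y, y, rfl⟩ : isoSet Q g n C)

-- The `else 0` branches are never reached for `t < n`, the only heights that occur.
variable (k n) in
def rise (j : {i : Q.V // C.repV i = i}) : ℕ → LocAlg k (sharp Q g n C) (isoSet Q g n C)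
  | 0 => 𝐞 j.1
  | t + 1 => if h : t < n - 1 then 𝐱 (isoArrLoc Q g n C (j, ⟨t, h⟩)) * rise j t else 0

variable (k n) in
def fall (j : {i : Q.V // C.repV i = i}) : ℕ → LocAlg k (sharp Q g n C) (isoSet Q g n C)
  | 0 => 𝐞 j.1
  | t + 1 => if h : t < n - 1 then fall j t * 𝐱 (isoInvLoc Q g n C (j, ⟨t, h⟩)) else 0

lemma rise_succ (j : {i : Q.V // C.repV i = i}) {t : ℕ} (h : t < n - 1) :
    rise k n j (t + 1) = 𝐱 (isoArrLoc Q g n C (j, ⟨t, h⟩)) * rise k n j t := by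
  rw [rise, dif_pos h]

lemma fall_succ (j : {i : Q.V // C.repV i = i}) {t : ℕ} (h : t < n - 1) :
    fall k n j (t + 1) = fall k n j t * 𝐱 (isoInvLoc Q g n C (j, ⟨t, h⟩)) := by
  rw [fall, dif_pos h]

lemma locVtx_mul_rise (j : {i : Q.V // C.repV i = i}) (t : ℕ) :
    𝐞 ((⇑g.onV)^[t] j) * rise k n j t = rise k n j t := by
  cases t with
  | zero => exact locVtx_mul_self _
  | succ t =>
    by_cases h : t < n - 1
    · rw [rise_succ j h, ← mul_assoc, locVtx_mul_isoArr (j, ⟨t, h⟩)]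
    · rw [rise, dif_neg h, mul_zero]

lemma rise_mul_fall (j : {i : Q.V // C.repV i = i}) {t : ℕ} (ht : t < n) :
    rise k n j t * fall k n j t = 𝐞 ((⇑g.onV)^[t] j) := by
  induction t with
  | zero => exact locVtx_mul_self _
  | succ t ih =>
    have h : t < n - 1 := by omega
    rw [rise_succ j h, fall_succ j h, mul_assoc, ← mul_assoc (rise k n j t), ih (by omega),
      ← mul_assoc, isoArr_mul_locVtx (j, ⟨t, h⟩), isoArr_mul_isoInv (j, ⟨t, h⟩)]

variable (k n C) in
def lift (v : Q.V) : LocAlg k (sharp Q g n C) (isoSet Q g n C) :=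
  rise k n ⟨C.repV v, C.repV_idem v⟩ (height g C v)

variable (k n C) in
def drop (v : Q.V) : LocAlg k (sharp Q g n C) (isoSet Q g n C) :=
  fall k n ⟨C.repV v, C.repV_idem v⟩ (height g C v)

lemma lift_mul_drop (hn : 0 < n) (ho : ∀ i, (⇑g.onV)^[n] i = i) (v : Q.V) :
    lift k n C v * drop k n C v = 𝐞 v := by
  rw [lift, drop, rise_mul_fall _ (height_lt hn ho v)]
  exact congrArg 𝐞 (iterate_height g C v)

lemma lift_iterate (hfree : Aut.FreeVertexOrbits Q g n) (j : {i : Q.V // C.repV i = i})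
    {t : ℕ} (ht : t < n) : lift k n C ((⇑g.onV)^[t] j) = rise k n j t := by
  rw [lift]
  congr 1
  · exact Subtype.ext ((repV_iterate t j.1).trans j.2)
  · exact height_iterate_of_repV hfree j.2 ht

lemma IsIsoArr.locArr_mul_lift (hfree : Aut.FreeVertexOrbits Q g n) {x : (𝒬).A}
    (hx : IsIsoArr Q g n C x) : 𝐱 x * lift k n C ((𝒬).s x) = lift k n C ((𝒬).t x) := by
  rcases hx with ⟨⟨j, t, ht⟩, rfl⟩ | ⟨⟨j, t, ht⟩, rfl⟩
  · change _ * lift k n C ((⇑g.onV)^[t] j) = lift k n C ((⇑g.onV)^[t + 1] j)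
    rw [lift_iterate hfree j (by omega), lift_iterate hfree j (by omega), rise_succ j ht]
  · change _ * lift k n C ((⇑g.onV)^[t + 1] j) = lift k n C ((⇑g.onV)^[t] j)
    rw [lift_iterate hfree j (by omega), lift_iterate hfree j (by omega), rise_succ j ht,
      ← mul_assoc, isoInv_mul_isoArr (j, ⟨t, ht⟩), locVtx_mul_rise]

lemma IsIsoList.locProd_mul_locVtx {l : List (𝒬).A} {u v : Q.V} (hn : 0 < n)
    (ho : ∀ i, (⇑g.onV)^[n] i = i) (hfree : Aut.FreeVertexOrbits Q g n)
    (hl : IsIsoList Q g n C l) (h : IsPathFrom 𝒬 l u v) :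
    𝐩 l * 𝐞 u = lift k n C v * drop k n C u := by
  rw [← lift_mul_drop hn ho u, ← mul_assoc, locProd_eq_prod,
    h.prod_map_mul_eq _ _ fun _ hx => (hl.isIsoArr hx).locArr_mul_lift hfree]

lemma IsIsoList.repV_eq {l : List (𝒬).A} {u v : Q.V} (hl : IsIsoList Q g n C l)
    (h : IsPathFrom 𝒬 l u v) : C.repV u = C.repV v :=
  h.eq_of_forall C.repV fun _ hx => (hl.isIsoArr hx).repV_eq

lemma IsIsoList.sum_weight {l : List (𝒬).A} {u v : Q.V} (hfree : Aut.FreeVertexOrbits Q g n)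
    (hl : IsIsoList Q g n C l) (h : IsPathFrom 𝒬 l u v) :
    (l.map (locWeight (sharp Q g n C) (isoSet Q g n C) (sharpWeight Q g n C))).sum =
      (height g C v : ℤ) - height g C u :=
  h.sum_map_eq_sub _ (fun v => (height g C v : ℤ)) fun _ hx => (hl.isIsoArr hx).weight_eq hfree

lemma IsIsoList.locProd_mul_locVtx_eq {l l' : List (𝒬).A} {u v : Q.V} (hn : 0 < n)
    (ho : ∀ i, (⇑g.onV)^[n] i = i) (hfree : Aut.FreeVertexOrbits Q g n)
    (hl : IsIsoList Q g n C l) (hl' : IsIsoList Q g n C l') (h : IsPathFrom 𝒬 l u v)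
    (h' : IsPathFrom 𝒬 l' u v) : 𝐩 l * 𝐞 u = 𝐩 l' * 𝐞 u := by
  rw [hl.locProd_mul_locVtx hn ho hfree h, hl'.locProd_mul_locVtx hn ho hfree h']

lemma IsIsoList.locProd_mul_locVtx_self {l : List (𝒬).A} {u : Q.V} (hn : 0 < n)
    (ho : ∀ i, (⇑g.onV)^[n] i = i) (hfree : Aut.FreeVertexOrbits Q g n)
    (hl : IsIsoList Q g n C l) (h : IsPathFrom 𝒬 l u u) : 𝐩 l * 𝐞 u = 𝐞 u := by
  rw [hl.locProd_mul_locVtx hn ho hfree h, lift_mul_drop hn ho]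

end IsoPaths

section XiFactorization

variable {k : Type} [CommRing k] {Q : Quiv} {g : Aut Q} {n : ℕ} {C : OrbitChoice Q g}
  {cd : ConnData Q g n C} {ξ : PathAlg k Q →ₐ[k] LocAlg k (sharp Q g n C) (isoSet Q g n C)}

local notation "𝒬" => Quiv.loc (sharp Q g n C) (isoSet Q g n C)
local notation "𝐩" => locProd k (sharp Q g n C) (isoSet Q g n C)
local notation "𝐞" => locVtx k (sharp Q g n C) (isoSet Q g n C)
local notation "𝐱" => locArr k (sharp Q g n C) (isoSet Q g n C)
local notation "𝐝" => locWeight (sharp Q g n C) (isoSet Q g n C) (sharpWeight Q g n C)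

variable (ξ) in
structure XiFactorization (l : List (𝒬).A) (u v : Q.V) where
  p : List Q.A
  w : Q.V
  q : List (𝒬).A
  isPathFrom_p : IsPathFrom Q p u w
  isIsoList_q : IsIsoList Q g n C q
  isPathFrom_q : IsPathFrom 𝒬 q w v
  -- `factor` alone would leave a stray idempotent `e_u` when `p = []`
  q_eq_of_p_eq_nil : p = [] → q = l
  factor : 𝐩 l * 𝐞 u = 𝐩 q * ξ (vtx k Q w * pathOf k Q p * vtx k Q u)
  deg_eq : ((l.map 𝐝).sum : ZMod n) = (q.map 𝐝).sum

lemma locVtx_mul_xi (hvtx : ∀ i, ξ (vtx k Q i) = 𝐞 i) (w : Q.V) (x y : PathAlg k Q) :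
    𝐞 w * ξ (vtx k Q w * x * y) = ξ (vtx k Q w * x * y) := by
  rw [← hvtx, ← map_mul, ← mul_assoc, ← mul_assoc, vtx_mul_self]

lemma xi_arr (hξ : XiSpec k Q g n C cd ξ) (a : Q.A) :
    ξ (arr k Q a) = 𝐩 (cd.P a) * 𝐱 (genLoc Q g n C a) * 𝐩 (cd.Qc a) := by
  rw [hξ.2, xiArrList, locProd_append, locProd_append, locProd_cons, locProd_nil, mul_one]

lemma XiFactorization.nonempty_nil (hvtx : ∀ i, ξ (vtx k Q i) = 𝐞 i) (u : Q.V) :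
    Nonempty (XiFactorization ξ [] u u) :=
  ⟨⟨[], u, [], isPathFrom_nil_iff.2 rfl, fun _ h => (List.not_mem_nil h).elim,
    isPathFrom_nil_iff.2 rfl, fun _ => rfl,
    by rw [pathOf_nil, mul_one, vtx_mul_self, hvtx], rfl⟩⟩

lemma XiFactorization.nonempty_cons_of_isIsoArr {l : List (𝒬).A} {u : Q.V} {x : (𝒬).A}
    (F : XiFactorization ξ l u ((𝒬).s x)) (hx : IsIsoArr Q g n C x) :
    Nonempty (XiFactorization ξ (x :: l) u ((𝒬).t x)) :=
  ⟨⟨F.p, F.w, x :: F.q, F.isPathFrom_p, List.forall_mem_cons.2 ⟨hx, F.isIsoList_q⟩,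
    isPathFrom_cons_iff.2 ⟨rfl, F.isPathFrom_q⟩, fun hp => by rw [F.q_eq_of_p_eq_nil hp],
    by rw [locProd_cons, locProd_cons, mul_assoc, F.factor]; exact (mul_assoc _ _ _).symm,
    by simp only [List.map_cons, List.sum_cons, Int.cast_add, F.deg_eq]⟩⟩

lemma genLoc_iterate (m : ℕ) (a : Q.A) :
    genLoc Q g n C ((⇑g.onA)^[m] a) = genLoc Q g n C a := by
  simp only [genLoc, genArrow_iterate]
  rfl

lemma genLoc_genArrow (a : Q.A) : genLoc Q g n C (C.genArrow a) = genLoc Q g n C a := by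
  simp only [genLoc, C.genArrow_idem]
  rfl

lemma XiFactorization.nonempty_cons_genLoc (hn : 0 < n) (ho : ∀ i, (⇑g.onV)^[n] i = i)
    (hfree : Aut.FreeVertexOrbits Q g n) (hξ : XiSpec k Q g n C cd ξ) {l : List (𝒬).A}
    {u : Q.V} {a : Q.A} (F : XiFactorization ξ l u (Q.s (C.genArrow a))) :
    Nonempty (XiFactorization ξ (genLoc Q g n C a :: l) u (Q.t (C.genArrow a))) := by
  -- `a'` is the arrow of the orbit of `a_j` that starts at `w`
  obtain ⟨m, hm⟩ : ∃ m, (⇑g.onV)^[m] (Q.s (C.genArrow a)) = F.w :=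
    exists_iterate_eq_of_repV_eq hn ho (F.isIsoList_q.repV_eq F.isPathFrom_q).symm
  set a' := (⇑g.onA)^[m] (C.genArrow a)
  have hsa' : Q.s a' = F.w := by rw [s_iterate, hm]
  have hgen : C.genArrow a' = C.genArrow a := by rw [genArrow_iterate, C.genArrow_idem]
  have hP : IsPathFrom 𝒬 (cd.P a') (Q.t (C.genArrow a)) (Q.t a') := hgen ▸ cd.endP a'
  have hQc : IsPathFrom 𝒬 (cd.Qc a') F.w (Q.s (C.genArrow a)) := hsa' ▸ hgen ▸ cd.endQc a'
  refine ⟨⟨a' :: F.p, Q.t a', isoRev Q g n C (cd.P a'),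
    isPathFrom_cons_iff.2 ⟨rfl, hsa' ▸ F.isPathFrom_p⟩, (cd.isoP a').isoRev,
    hP.isoRev (cd.isoP a'), fun h => absurd h (List.cons_ne_nil _ _), ?_, ?_⟩⟩
  · set Z := vtx k Q F.w * pathOf k Q F.p * vtx k Q u
    have hZ : 𝐞 F.w * ξ Z = ξ Z := locVtx_mul_xi hξ.1 _ _ _
    have hq : 𝐩 F.q * 𝐞 F.w = 𝐩 (cd.Qc a') * 𝐞 F.w :=
      F.isIsoList_q.locProd_mul_locVtx_eq hn ho hfree (cd.isoQc a') F.isPathFrom_q hQc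
    have hloop : 𝐩 (isoRev Q g n C (cd.P a') ++ cd.P a') * 𝐞 (Q.t (C.genArrow a)) =
        𝐞 (Q.t (C.genArrow a)) :=
      IsIsoList.locProd_mul_locVtx_self hn ho hfree
        (List.forall_mem_append.2 ⟨(cd.isoP a').isoRev, cd.isoP a'⟩)
        ((hP.isoRev (cd.isoP a')).append hP)
    have hpath : vtx k Q (Q.t a') * pathOf k Q (a' :: F.p) * vtx k Q u = arr k Q a' * Z := by
      rw [pathOf_cons, ← mul_assoc, vtx_mul_arr]
      conv_lhs => rw [← arr_mul_vtx a', hsa']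
      simp only [Z, mul_assoc]
    have hx : 𝐞 (Q.t (C.genArrow a)) * 𝐱 (genLoc Q g n C a) = 𝐱 (genLoc Q g n C a) :=
      locVtx_mul_locArr (genLoc Q g n C a)
    calc 𝐩 (genLoc Q g n C a :: l) * 𝐞 u
        = 𝐞 (Q.t (C.genArrow a)) * 𝐱 (genLoc Q g n C a) * (𝐩 F.q * 𝐞 F.w * ξ Z) := by
          rw [locProd_cons, mul_assoc, F.factor, hx, mul_assoc (𝐩 F.q), hZ]
      _ = 𝐩 (isoRev Q g n C (cd.P a') ++ cd.P a') * 𝐞 (Q.t (C.genArrow a)) *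
            𝐱 (genLoc Q g n C a) *
            (𝐩 (cd.Qc a') * 𝐞 F.w * ξ Z) := by rw [hloop, hq]
      _ = 𝐩 (isoRev Q g n C (cd.P a')) *
            ξ (vtx k Q (Q.t a') * pathOf k Q (a' :: F.p) * vtx k Q u) := by
          rw [hpath, map_mul ξ (arr k Q a'), xi_arr hξ, genLoc_iterate, genLoc_genArrow,
            locProd_append, mul_assoc (𝐩 (cd.Qc a')), hZ]
          simp only [mul_assoc]
          rw [← mul_assoc (𝐞 (Q.t (C.genArrow a))), hx]
  · simp only [List.map_cons, List.sum_cons]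
    rw [show 𝐝 (genLoc Q g n C a) = 0 from rfl, zero_add, F.deg_eq,
      F.isIsoList_q.sum_weight hfree F.isPathFrom_q,
      (cd.isoP a').isoRev.sum_weight hfree (hP.isoRev (cd.isoP a'))]
    push_cast
    rw [← hm, t_iterate, height_iterate hn ho hfree, height_iterate hn ho hfree]
    ring

lemma nonempty_xiFactorization (hn : 0 < n) (ho : ∀ i, (⇑g.onV)^[n] i = i)
    (hfree : Aut.FreeVertexOrbits Q g n) (hξ : XiSpec k Q g n C cd ξ) {l : List (𝒬).A}
    {u v : Q.V} (h : IsPathFrom 𝒬 l u v) : Nonempty (XiFactorization ξ l u v) := by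
  induction l generalizing v with
  | nil =>
    rw [← isPathFrom_nil_iff.1 h]
    exact XiFactorization.nonempty_nil hξ.1 u
  | cons x l ih =>
    obtain ⟨rfl, hl⟩ := isPathFrom_cons_iff.1 h
    obtain ⟨F⟩ := ih hl
    rcases isIsoArr_or_eq_genLoc x with hx | ⟨a, rfl⟩
    · exact F.nonempty_cons_of_isIsoArr hx
    · exact F.nonempty_cons_genLoc hn ho hfree hξ

lemma XiFactorization.locProd_eq {l : List (𝒬).A} {u v : Q.V} (F : XiFactorization ξ l u v)
    (hl : IsPathFrom 𝒬 l u v) (hne : l ≠ []) : 𝐩 l = 𝐩 F.q * ξ (pathOf k Q F.p) := by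
  by_cases hp : F.p = []
  · rw [F.q_eq_of_p_eq_nil hp, hp, pathOf_nil, map_one, mul_one]
  · rw [← hl.locProd_mul_locVtx hne, F.factor, F.isPathFrom_p.vtx_mul_pathOf_mul_vtx hp]

lemma XiFactorization.locProd_mem_range (hn : 0 < n) (ho : ∀ i, (⇑g.onV)^[n] i = i)
    (hfree : Aut.FreeVertexOrbits Q g n) (hvtx : ∀ i, ξ (vtx k Q i) = 𝐞 i)
    {l : List (𝒬).A} {u v : Q.V} (F : XiFactorization ξ l u v) (hl : IsPathFrom 𝒬 l u v)
    (hne : l ≠ []) (hdvd : (n : ℤ) ∣ (l.map 𝐝).sum) : 𝐩 l ∈ Set.range ξ := by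
  have hw : F.w = v := by
    refine eq_of_height_eq hn ho (F.isIsoList_q.repV_eq F.isPathFrom_q) ?_
    have h := F.deg_eq
    rw [(ZMod.intCast_zmod_eq_zero_iff_dvd _ _).2 hdvd,
      F.isIsoList_q.sum_weight hfree F.isPathFrom_q] at h
    push_cast at h
    exact (sub_eq_zero.1 h.symm).symm
  have hloop : 𝐩 F.q * 𝐞 F.w = 𝐞 F.w := by
    rw [F.isIsoList_q.locProd_mul_locVtx hn ho hfree F.isPathFrom_q, hw, lift_mul_drop hn ho]
  refine ⟨vtx k Q F.w * pathOf k Q F.p * vtx k Q u, ?_⟩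
  rw [← hl.locProd_mul_locVtx hne, F.factor, ← locVtx_mul_xi hvtx, ← mul_assoc,
    hloop, locVtx_mul_xi hvtx]

end XiFactorization

end Quiv

open Quiv in
theorem statement_5_general (Q : Quiv) (T : Quiv.Tiling Q) (g : Quiv.TAut Q T) (n : ℕ)
    (hn : 0 < n)
    (horder : Quiv.Aut.OrderDvd Q g.toAut n)
    (hfree : Quiv.Aut.FreeVertexOrbits Q g.toAut n)
    (C : Quiv.OrbitChoice Q g.toAut)
    (cd : Quiv.ConnData Q g.toAut n C)
    (ξ : PathAlg ℂ Q →ₐ[ℂ] LocAlg ℂ (sharp Q g.toAut n C) (isoSet Q g.toAut n C))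
    (hξ : XiSpec ℂ Q g.toAut n C cd ξ) :
    ∀ l : List ((sharp Q g.toAut n C).loc (isoSet Q g.toAut n C)).A,
      Composable ((sharp Q g.toAut n C).loc (isoSet Q g.toAut n C)) l →
      (∃ (p : List Q.A) (q : List ((sharp Q g.toAut n C).loc (isoSet Q g.toAut n C)).A),
          Composable Q p ∧ IsIsoList Q g.toAut n C q ∧
          Composable ((sharp Q g.toAut n C).loc (isoSet Q g.toAut n C)) q ∧
          locProd ℂ (sharp Q g.toAut n C) (isoSet Q g.toAut n C) l =
            locProd ℂ (sharp Q g.toAut n C) (isoSet Q g.toAut n C) q * ξ (pathOf ℂ Q p)) ∧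
      ((n : ℤ) ∣ (l.map (locWeight (sharp Q g.toAut n C) (isoSet Q g.toAut n C)
            (sharpWeight Q g.toAut n C))).sum →
        locProd ℂ (sharp Q g.toAut n C) (isoSet Q g.toAut n C) l ∈ Set.range ξ) := by
  intro l hl
  rcases eq_or_ne l [] with rfl | hne
  · exact ⟨⟨[], [], List.isChain_nil, fun _ h => (List.not_mem_nil h).elim, List.isChain_nil,
      by simp⟩, fun _ => ⟨1, by simp⟩⟩
  have hpath := isPathFrom_of_composable hl hne
  obtain ⟨F⟩ := nonempty_xiFactorization hn horder.1 hfree hξ hpath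
  exact ⟨⟨F.p, F.q, F.isPathFrom_p.1, F.isIsoList_q, F.isPathFrom_q.1,
    F.locProd_eq hpath hne⟩, F.locProd_mem_range hn horder.1 hfree hξ.1 hpath hne⟩

open Quiv in
/-- Every path `p'` in `ℂQ'` can be written as `p' = q·ξ(p)`
for some path `p ∈ ℂQ` and some path `q ∈ ℂQ'` composed solely of isomorphism
arrows and their inverses.  In particular, if `deg(p') ≡ 0 mod n` then `p'`
lies in the image of `ξ`. -/
theorem statement_5 (Q : Quiv) (T : Quiv.Tiling Q) (g : Quiv.TAut Q T) (n : ℕ)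
    (hn : 0 < n)
    (horder : Quiv.Aut.OrderDvd Q g.toAut n)
    (horderTV : ∀ v, (⇑g.onTV)^[n] v = v)
    (hfree : Quiv.Aut.FreeVertexOrbits Q g.toAut n)
    (C : Quiv.OrbitChoice Q g.toAut)
    (cd : Quiv.ConnData Q g.toAut n C)
    (ξ : PathAlg ℂ Q →ₐ[ℂ] LocAlg ℂ (sharp Q g.toAut n C) (isoSet Q g.toAut n C))
    (hξ : XiSpec ℂ Q g.toAut n C cd ξ) :
    ∀ l : List ((sharp Q g.toAut n C).loc (isoSet Q g.toAut n C)).A,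
      Composable ((sharp Q g.toAut n C).loc (isoSet Q g.toAut n C)) l →
      (∃ (p : List Q.A) (q : List ((sharp Q g.toAut n C).loc (isoSet Q g.toAut n C)).A),
          Composable Q p ∧ IsIsoList Q g.toAut n C q ∧
          Composable ((sharp Q g.toAut n C).loc (isoSet Q g.toAut n C)) q ∧
          locProd ℂ (sharp Q g.toAut n C) (isoSet Q g.toAut n C) l =
            locProd ℂ (sharp Q g.toAut n C) (isoSet Q g.toAut n C) q * ξ (pathOf ℂ Q p)) ∧
      ((n : ℤ) ∣ (l.map (locWeight (sharp Q g.toAut n C) (isoSet Q g.toAut n C)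
            (sharpWeight Q g.toAut n C))).sum →
        locProd ℂ (sharp Q g.toAut n C) (isoSet Q g.toAut n C) l ∈ Set.range ξ) :=
  statement_5_general Q T g n hn horder hfree C cd ξ hξ
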